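/- (Theorem 2: equivalence of stochastic and deterministic two-machine makespan minimization with uncorrelated jobs.) Let n ≥ 1, let μ : Fin n → ℝ be the mean processing times and σ² : Fin n → ℝ be the variances, with σ²_j ≥ 0 for all j and Σ_j σ²_j > 0; set θ = √(Σ_j σ²_j). For a job assignment given by A : Fin n → Bool, let L₁(A) = Σ_{j : A j = true} μ_j and L₂(A) = Σ_{j : A j = false} μ_j, let δ(A) = |L₁(A) − L₂(A)|, and let E(A) = max(L₁(A), L₂(A))·Φ(δ(A)/θ) + min(L₁(A), L₂(A))·Φ(−δ(A)/θ) + θ·φ(δ(A)/θ), the expected makespan under jointly Gaussian uncorrelated processing times. Then for all assignments A and A', E(A) ≤ E(A') if and only if max(L₁(A), L₂(A)) ≤ max(L₁(A'), L₂(A')); in particular an assignment minimizes the expected makespan if and only if it minimizes the deterministic makespan max(L₁, L₂). -/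

import Mathlib

open MeasureTheory ProbabilityTheory Real

/-- Standard normal p.d.f. -/
noncomputable def phi (w : ℝ) : ℝ := (1 / Real.sqrt (2 * Real.pi)) * Real.exp (-w ^ 2 / 2)

/-- Standard normal c.d.f. -/
noncomputable def Phi (w : ℝ) : ℝ := ∫ u in Set.Iic w, phi u

/-- Load of machine 1. -/
noncomputable def L1 {n : ℕ} (μ : Fin n → ℝ) (A : Fin n → Bool) : ℝ :=
  ∑ j ∈ Finset.univ.filter (fun j => A j = true), μ j

/-- Load of machine 2. -/
noncomputable def L2 {n : ℕ} (μ : Fin n → ℝ) (A : Fin n → Bool) : ℝ :=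
  ∑ j ∈ Finset.univ.filter (fun j => A j = false), μ j

/-- Expected makespan under uncorrelated jointly Gaussian processing times,
where `θ = √(∑ σ²ⱼ)` does not depend on the assignment. -/
noncomputable def expMakespan {n : ℕ} (μ : Fin n → ℝ) (θ : ℝ) (A : Fin n → Bool) : ℝ :=
  max (L1 μ A) (L2 μ A) * Phi (|L1 μ A - L2 μ A| / θ)
    + min (L1 μ A) (L2 μ A) * Phi (-|L1 μ A - L2 μ A| / θ)
    + θ * phi (|L1 μ A - L2 μ A| / θ)


lemma phi_pos (w : ℝ) : 0 < phi w := by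
  apply mul_pos
  · positivity
  · exact Real.exp_pos _

lemma phi_neg (w : ℝ) : phi (-w) = phi w := by simp [phi]

lemma continuous_phi : Continuous phi := by
  unfold phi; fun_prop

lemma integrable_phi : Integrable phi := by
  have h : Integrable (fun x : ℝ => Real.exp (-(1/2 : ℝ) * x ^ 2)) :=
    integrable_exp_neg_mul_sq (by norm_num)
  have h2 := h.const_mul (1 / Real.sqrt (2 * Real.pi))
  exact h2.congr (Filter.Eventually.of_forall fun x => by unfold phi; ring_nf)

lemma hasDerivAt_phi (w : ℝ) : HasDerivAt phi (-w * phi w) w := by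
  have h1 : HasDerivAt (fun x : ℝ => -x ^ 2 / 2) (-w) w := by
    have := ((hasDerivAt_pow 2 w).neg).div_const 2
    simpa using this.congr_deriv (by ring)
  have h2 : HasDerivAt phi (1 / Real.sqrt (2 * Real.pi) * (Real.exp (-w ^ 2 / 2) * -w)) w :=
    (h1.exp).const_mul (1 / Real.sqrt (2 * Real.pi))
  exact h2.congr_deriv (by unfold phi; ring)

lemma Phi_sub_Phi (a b : ℝ) : Phi b - Phi a = ∫ x in a..b, phi x := by
  exact intervalIntegral.integral_Iic_sub_Iic integrable_phi.integrableOn integrable_phi.integrableOn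

lemma hasDerivAt_Phi (w : ℝ) : HasDerivAt Phi (phi w) w := by
  have key : ∀ x : ℝ, Phi x = Phi 0 + ∫ u in (0:ℝ)..x, phi u := by
    intro x
    rw [← Phi_sub_Phi 0 x]; ring
  have h : HasDerivAt (fun x => Phi 0 + ∫ u in (0:ℝ)..x, phi u) (phi w) w := by
    apply HasDerivAt.const_add
    exact intervalIntegral.integral_hasDerivAt_right
      (integrable_phi.intervalIntegrable)
      continuous_phi.aestronglyMeasurable.stronglyMeasurableAtFilter
      continuous_phi.continuousAt
  exact h.congr_of_eventuallyEq (Filter.Eventually.of_forall key)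

lemma strictMono_Phi : StrictMono Phi := by
  intro a b hab
  have : 0 < Phi b - Phi a := by
    rw [Phi_sub_Phi]
    exact intervalIntegral.intervalIntegral_pos_of_pos
      (integrable_phi.intervalIntegrable) (fun x => phi_pos x) hab
  linarith

section Main

variable {n : ℕ}

lemma L1_add_L2 (μ : Fin n → ℝ) (A : Fin n → Bool) : L1 μ A + L2 μ A = ∑ j, μ j := by
  unfold L1 L2
  rw [show (Finset.univ.filter (fun j => A j = false))
      = Finset.univ.filter (fun j => ¬ (A j = true)) by simp]
  exact Finset.sum_filter_add_sum_filter_not _ _ _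

lemma abs_L1_sub_L2 (μ : Fin n → ℝ) (A : Fin n → Bool) :
    |L1 μ A - L2 μ A| = 2 * max (L1 μ A) (L2 μ A) - ∑ j, μ j := by
  rw [← max_sub_min_eq_abs, ← L1_add_L2 μ A, ← max_add_min (L1 μ A) (L2 μ A),
    sup_comm, inf_comm]
  ring

lemma min_eq_sum_sub (μ : Fin n → ℝ) (A : Fin n → Bool) :
    min (L1 μ A) (L2 μ A) = (∑ j, μ j) - max (L1 μ A) (L2 μ A) := by
  rw [← L1_add_L2 μ A, ← max_add_min (L1 μ A) (L2 μ A)]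
  ring

end Main

theorem stochastic_eq_deterministic_makespan
    (n : ℕ) (hn : 1 ≤ n) (μ σ2 : Fin n → ℝ)
    (hσ : ∀ j, 0 ≤ σ2 j) (hpos : 0 < ∑ j, σ2 j) :
    ∀ A A' : Fin n → Bool,
      expMakespan μ (Real.sqrt (∑ j, σ2 j)) A
          ≤ expMakespan μ (Real.sqrt (∑ j, σ2 j)) A'
        ↔ max (L1 μ A) (L2 μ A) ≤ max (L1 μ A') (L2 μ A') := by
  set θ : ℝ := Real.sqrt (∑ j, σ2 j) with hθdef
  have hθ : 0 < θ := Real.sqrt_pos.mpr hpos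
  set S : ℝ := ∑ j, μ j with hSdef
  set g : ℝ → ℝ := fun m =>
    m * Phi ((2 * m - S) / θ) + (S - m) * Phi (-((2 * m - S) / θ))
      + θ * phi ((2 * m - S) / θ) with hgdef
  -- expMakespan equals g of the max load
  have hE : ∀ A : Fin n → Bool, expMakespan μ θ A = g (max (L1 μ A) (L2 μ A)) := by
    intro A
    unfold expMakespan
    rw [abs_L1_sub_L2 μ A, min_eq_sum_sub μ A, hgdef]
    simp only [neg_div]
    simp only [hSdef]
  -- derivative of g
  have hderiv : ∀ m : ℝ,
      HasDerivAt g (Phi ((2 * m - S) / θ) - Phi (-((2 * m - S) / θ))) m := by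
    intro m
    have hlin : HasDerivAt (fun m : ℝ => (2 * m - S) / θ) (2 / θ) m := by
      have := (((hasDerivAt_id m).const_mul 2).sub_const S).div_const θ
      simpa using this
    have hPhi1 : HasDerivAt (fun m : ℝ => Phi ((2 * m - S) / θ))
        (phi ((2 * m - S) / θ) * (2 / θ)) m := by
      have := (hasDerivAt_Phi ((2 * m - S) / θ)).comp m hlin; exact this
    have hPhi2 : HasDerivAt (fun m : ℝ => Phi (-((2 * m - S) / θ)))
        (phi (-((2 * m - S) / θ)) * -(2 / θ)) m := by
      have := (hasDerivAt_Phi (-((2 * m - S) / θ))).comp m hlin.neg; exact this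
    have hphi1 : HasDerivAt (fun m : ℝ => phi ((2 * m - S) / θ))
        ((-((2 * m - S) / θ) * phi ((2 * m - S) / θ)) * (2 / θ)) m := by
      have := (hasDerivAt_phi ((2 * m - S) / θ)).comp m hlin; exact this
    have t1 := (hasDerivAt_id m).mul hPhi1
    have t2 := ((hasDerivAt_const m S).sub (hasDerivAt_id m)).mul hPhi2
    have t3 := hphi1.const_mul θ
    have hg := (t1.add t2).add t3
    have hc : θ * θ⁻¹ = 1 := mul_inv_cancel₀ hθ.ne'
    convert hg using 1
    · rfl
    · rfl
    · rfl
    simp only [phi_neg, id_eq, div_eq_mul_inv, Pi.sub_apply]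
    linear_combination (2 * θ⁻¹ * (2 * m - S) * phi ((2 * m - S) * θ⁻¹) : ℝ) * hc
  -- g is strictly monotone on [S/2, ∞)
  have hsm : StrictMonoOn g (Set.Ici (S / 2)) := by
    apply strictMonoOn_of_deriv_pos (convex_Ici _)
    · exact fun m _ => (hderiv m).differentiableAt.continuousAt.continuousWithinAt
    · intro m hm
      rw [interior_Ici] at hm
      rw [(hderiv m).deriv]
      have hx : 0 < (2 * m - S) / θ := by
        apply div_pos _ hθ
        simp only [Set.mem_Ioi] at hm
        linarith
      have := strictMono_Phi (neg_lt_self hx)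
      linarith
  -- the max load lies in [S/2, ∞)
  have hmem : ∀ A : Fin n → Bool, max (L1 μ A) (L2 μ A) ∈ Set.Ici (S / 2) := by
    intro A
    have h1 := le_max_left (L1 μ A) (L2 μ A)
    have h2 := le_max_right (L1 μ A) (L2 μ A)
    have h3 := L1_add_L2 μ A
    simp only [Set.mem_Ici]
    rw [hSdef]
    linarith
  intro A A'
  rw [hE A, hE A']
  exact hsm.le_iff_le (hmem A) (hmem A')
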